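/- arXiv:1005.3193 — 7 statements merged into one kernel-verified Lean document; each statement's English description precedes it below -/
import Mathlib

section
/- Let W be a module, and let a, b, x, z be submodules with W = x ⊕ a = x ⊕ b = z ⊕ a = z ⊕ b. Then the endomorphism M_{xabz} := P^a_x - P^z_b is invertible, with inverse equal to M_{zabx} = P^a_z - P^x_b. -/
/-!
A projection acts as the identity on operators with range in its image and kills those with
range in its kernel, and `P^a_x + P^x_a = 1`. Expanding `(P^a_x - P^z_b) (P^a_z - P^x_b)` with these rules gives
`P^a_x - (P^a_x - P^b_x) - 0 + P^x_b = P^b_x + P^x_b = 1`; the other product is the same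
computation with `x` and `z` exchanged.
-/

/-- The projection onto `x` along `a` (image `x`, kernel `a`), denoted `P^a_x`. -/
noncomputable def projEnd {R W : Type*} [Ring R] [AddCommGroup W] [Module R W]
    (x a : Submodule R W) (h : IsCompl x a) : Module.End R W :=
  x.subtype ∘ₗ x.linearProjOfIsCompl a h

section Projections

open LinearMap Submodule

variable {R W : Type*} [Ring R] [AddCommGroup W] [Module R W] {x a : Submodule R W}

theorem projEnd_add_projEnd_symm (h : IsCompl x a) : projEnd x a h + projEnd a x h.symm = 1 :=
  projection_add_projection_eq_id h

theorem range_projEnd (h : IsCompl x a) : range (projEnd x a h) = x :=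
  range_projection h

theorem projEnd_mul_of_range_le (h : IsCompl x a) {f : Module.End R W} (hf : range f ≤ x) :
    projEnd x a h * f = f :=
  LinearMap.ext fun w => projection_apply_of_mem_left h (hf (mem_range_self f w))

theorem projEnd_mul_eq_zero_of_range_le (h : IsCompl x a) {f : Module.End R W}
    (hf : range f ≤ a) : projEnd x a h * f = 0 :=
  LinearMap.ext fun w => projection_apply_of_mem_right h (hf (mem_range_self f w))

theorem projEnd_sub_projEnd_mul_projEnd_sub_projEnd {z b : Submodule R W}
    (hxa : IsCompl x a) (hxb : IsCompl x b) (hza : IsCompl z a) (hzb : IsCompl z b) :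
    (projEnd x a hxa - projEnd b z hzb.symm) * (projEnd z a hza - projEnd b x hxb.symm) = 1 := by
  have hza' : projEnd z a hza = 1 - projEnd a z hza.symm :=
    eq_sub_of_add_eq (projEnd_add_projEnd_symm hza)
  have hbx' : projEnd b x hxb.symm = 1 - projEnd x b hxb :=
    eq_sub_of_add_eq' (projEnd_add_projEnd_symm hxb)
  have hxaz : projEnd x a hxa * projEnd a z hza.symm = 0 :=
    projEnd_mul_eq_zero_of_range_le hxa (range_projEnd _).le
  have hxxb : projEnd x a hxa * projEnd x b hxb = projEnd x b hxb :=
    projEnd_mul_of_range_le hxa (range_projEnd _).le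
  have hbzz : projEnd b z hzb.symm * projEnd z a hza = 0 :=
    projEnd_mul_eq_zero_of_range_le hzb.symm (range_projEnd _).le
  have hbbx : projEnd b z hzb.symm * projEnd b x hxb.symm = projEnd b x hxb.symm :=
    projEnd_mul_of_range_le hzb.symm (range_projEnd _).le
  calc (projEnd x a hxa - projEnd b z hzb.symm) * (projEnd z a hza - projEnd b x hxb.symm)
      = projEnd x a hxa * projEnd z a hza - projEnd x a hxa * projEnd b x hxb.symm
          - projEnd b z hzb.symm * projEnd z a hza
          + projEnd b z hzb.symm * projEnd b x hxb.symm := by noncomm_ring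
    _ = projEnd x b hxb + projEnd b x hxb.symm := by
      rw [hbzz, hbbx]
      nth_rw 1 [hza', hbx']
      rw [mul_sub, mul_sub, mul_one, hxaz, hxxb]
      abel
    _ = 1 := projEnd_add_projEnd_symm hxb

end Projections

/-- if `W = x ⊕ a = x ⊕ b = z ⊕ a = z ⊕ b`, then
`M_{xabz} = P^a_x - P^z_b` is invertible with inverse `M_{zabx} = P^a_z - P^x_b`. -/
theorem stmt1 {R W : Type*} [Ring R] [AddCommGroup W] [Module R W]
    (x a z b : Submodule R W)
    (hxa : IsCompl x a) (hxb : IsCompl x b) (hza : IsCompl z a) (hzb : IsCompl z b) :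
    (projEnd x a hxa - projEnd b z hzb.symm) * (projEnd z a hza - projEnd b x hxb.symm) = 1 ∧
    (projEnd z a hza - projEnd b x hxb.symm) * (projEnd x a hxa - projEnd b z hzb.symm) = 1 :=
  ⟨projEnd_sub_projEnd_mul_projEnd_sub_projEnd hxa hxb hza hzb,
    projEnd_sub_projEnd_mul_projEnd_sub_projEnd hza hzb hxa hxb⟩
end

section
/- Let 𝔸 be an associative unital algebra over a commutative ring K and fix a ∈ 𝔸. On the set G(𝔸,a) = { x ∈ 𝔸 | 1 - x·a is invertible }, the binary operation x ·_a y := x + y - x·a·y is a group law with neutral element 0 and inverse j_a(x) = -(1 - x·a)⁻¹ · x. -/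
/-!
The map `x ↦ 1 - x·a` is multiplicative from `x ·_a y := x + y - x·a·y` to the product of `𝔸`:
`1 - (x ·_a y)·a = (1 - x·a)(1 - y·a)`. Closure is therefore closure of units under products,
and for `u = (1 - x·a)⁻¹` one finds `1 - j_a(x)·a = u`, while `x ·_a j_a(x) = x - (1 - x·a)·u·x`
and `j_a(x) ·_a x = x - u·(1 - x·a)·x` both vanish.
-/

namespace QuasiProduct

variable {A : Type*} [Ring A] (a : A)

def circ (x y : A) : A := x + y - x * a * y

noncomputable def circInv (x : A) : A := -(Ring.inverse (1 - x * a) * x)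

theorem one_sub_circ_mul (x y : A) : 1 - circ a x y * a = (1 - x * a) * (1 - y * a) := by
  unfold circ; noncomm_ring

theorem circ_assoc (x y z : A) : circ a (circ a x y) z = circ a x (circ a y z) := by
  unfold circ; noncomm_ring

theorem circ_zero (x : A) : circ a x 0 = x := by simp [circ]

theorem zero_circ (x : A) : circ a 0 x = x := by simp [circ]

variable {a} {x : A} (hx : IsUnit (1 - x * a))
include hx

theorem one_sub_circInv_mul : 1 - circInv a x * a = Ring.inverse (1 - x * a) := by
  have h : Ring.inverse (1 - x * a) * (1 - x * a) = 1 := Ring.inverse_mul_cancel _ hx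
  calc 1 - circInv a x * a
      = Ring.inverse (1 - x * a) * (1 - x * a) + Ring.inverse (1 - x * a) * x * a := by
        rw [h, circInv]; noncomm_ring
    _ = Ring.inverse (1 - x * a) := by noncomm_ring

theorem circ_circInv : circ a x (circInv a x) = 0 := by
  calc circ a x (circInv a x) = x - (1 - x * a) * Ring.inverse (1 - x * a) * x := by
        unfold circ circInv; noncomm_ring
    _ = 0 := by rw [Ring.mul_inverse_cancel _ hx, one_mul, sub_self]

theorem circInv_circ : circ a (circInv a x) x = 0 := by
  calc circ a (circInv a x) x = x - Ring.inverse (1 - x * a) * (1 - x * a) * x := by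
        unfold circ circInv; noncomm_ring
    _ = 0 := by rw [Ring.inverse_mul_cancel _ hx, one_mul, sub_self]

end QuasiProduct

open QuasiProduct in
theorem stmt3_general {A : Type*} [Ring A] (a : A) :
    -- closure
    (∀ x y : A, IsUnit (1 - x * a) → IsUnit (1 - y * a) →
      IsUnit (1 - (x + y - x * a * y) * a)) ∧
    -- associativity
    (∀ x y z : A,
      ((x + y - x * a * y) + z - (x + y - x * a * y) * a * z)
        = (x + (y + z - y * a * z) - x * a * (y + z - y * a * z))) ∧
    -- neutral element 0
    IsUnit (1 - (0 : A) * a) ∧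
    (∀ x : A, x + 0 - x * a * 0 = x) ∧ (∀ x : A, 0 + x - 0 * a * x = x) ∧
    -- inverses: j_a(x) = -(1 - x·a)⁻¹ · x
    (∀ x : A, IsUnit (1 - x * a) →
      IsUnit (1 - (-(Ring.inverse (1 - x * a) * x)) * a) ∧
      x + (-(Ring.inverse (1 - x * a) * x)) - x * a * (-(Ring.inverse (1 - x * a) * x)) = 0 ∧
      (-(Ring.inverse (1 - x * a) * x)) + x - (-(Ring.inverse (1 - x * a) * x)) * a * x = 0) := by
  refine ⟨fun x y hx hy => ?_, circ_assoc a, by simp, circ_zero a, zero_circ a,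
    fun x hx => ⟨?_, circ_circInv hx, circInv_circ hx⟩⟩
  · exact (one_sub_circ_mul a x y).symm ▸ hx.mul hy
  · exact (one_sub_circInv_mul hx).symm ▸ hx.ringInverse

/-- on `G(𝔸,a) = { x | 1 - x·a invertible }` the operation
`x ·_a y = x + y - x·a·y` is a group law with neutral element `0` and
inverse `j_a(x) = -(1 - x·a)⁻¹·x`. -/
theorem stmt3 {K A : Type*} [CommRing K] [Ring A] [Algebra K A] (a : A) :
    -- closure
    (∀ x y : A, IsUnit (1 - x * a) → IsUnit (1 - y * a) →
      IsUnit (1 - (x + y - x * a * y) * a)) ∧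
    -- associativity
    (∀ x y z : A,
      ((x + y - x * a * y) + z - (x + y - x * a * y) * a * z)
        = (x + (y + z - y * a * z) - x * a * (y + z - y * a * z))) ∧
    -- neutral element 0
    IsUnit (1 - (0 : A) * a) ∧
    (∀ x : A, x + 0 - x * a * 0 = x) ∧ (∀ x : A, 0 + x - 0 * a * x = x) ∧
    -- inverses: j_a(x) = -(1 - x·a)⁻¹ · x
    (∀ x : A, IsUnit (1 - x * a) →
      IsUnit (1 - (-(Ring.inverse (1 - x * a) * x)) * a) ∧
      x + (-(Ring.inverse (1 - x * a) * x)) - x * a * (-(Ring.inverse (1 - x * a) * x)) = 0 ∧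
      (-(Ring.inverse (1 - x * a) * x)) + x - (-(Ring.inverse (1 - x * a) * x)) * a * x = 0) :=
  stmt3_general a
end

section
/- Let K be a commutative ring, n ≥ 1, A ∈ M(n,n;K) symmetric (Aᵗ = A). Then the set Ô_n(A;K) = { X ∈ M(n,n;K) | Xᵗ + X = Xᵗ A X } is closed under the operation X ·_A Y := X + Y - X A Y, and (Ô_n(A;K), ·_A) is a monoid with identity element 0. -/
open Matrix

/-!
Write `x ∘ y = x + y - x a y`. This operation is associative with unit `0` in any ring, and the
defining equation of `Ô_n(A;K)` says exactly `Xᵀ ∘ X = 0`. For symmetric `A`, transposition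
reverses `∘`, so `(X ∘ Y)ᵀ ∘ (X ∘ Y) = Yᵀ ∘ (Xᵀ ∘ X) ∘ Y = Yᵀ ∘ Y = 0`.
-/

section Circ

variable {R : Type*} [Ring R]

def circ (a x y : R) : R := x + y - x * a * y

theorem circ_assoc (a x y z : R) : circ a (circ a x y) z = circ a x (circ a y z) := by
  simp only [circ]
  noncomm_ring

@[simp]
theorem circ_zero (a x : R) : circ a x 0 = x := by simp [circ]

@[simp]
theorem zero_circ (a x : R) : circ a 0 x = x := by simp [circ]

theorem circ_eq_zero_iff {a x y : R} : circ a x y = 0 ↔ x + y = x * a * y := sub_eq_zero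

theorem circ_circ_eq_zero {a x x' y y' : R} (hx : circ a x' x = 0) (hy : circ a y' y = 0) :
    circ a (circ a y' x') (circ a x y) = 0 := by
  rw [circ_assoc, ← circ_assoc a x', hx, zero_circ, hy]

end Circ

theorem Matrix.transpose_circ {m K : Type*} [Fintype m] [DecidableEq m] [CommRing K]
    {A : Matrix m m K} (hA : Aᵀ = A) (X Y : Matrix m m K) : (circ A X Y)ᵀ = circ A Yᵀ Xᵀ := by
  simp only [circ, transpose_sub, transpose_add, transpose_mul, hA, Matrix.mul_assoc]
  abel

theorem stmt6_general {K : Type*} [CommRing K] {n : ℕ}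
    (A : Matrix (Fin n) (Fin n) K) (hA : Aᵀ = A) :
    -- 0 belongs to the set
    ((0 : Matrix (Fin n) (Fin n) K)ᵀ + 0 = (0 : Matrix (Fin n) (Fin n) K)ᵀ * A * 0) ∧
    -- closure under the product
    (∀ X Y : Matrix (Fin n) (Fin n) K,
      Xᵀ + X = Xᵀ * A * X → Yᵀ + Y = Yᵀ * A * Y →
      (X + Y - X * A * Y)ᵀ + (X + Y - X * A * Y)
        = (X + Y - X * A * Y)ᵀ * A * (X + Y - X * A * Y)) ∧
    -- associativity
    (∀ X Y Z : Matrix (Fin n) (Fin n) K,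
      ((X + Y - X * A * Y) + Z - (X + Y - X * A * Y) * A * Z)
        = (X + (Y + Z - Y * A * Z) - X * A * (Y + Z - Y * A * Z))) ∧
    -- 0 is a two-sided identity
    (∀ X : Matrix (Fin n) (Fin n) K, X + 0 - X * A * 0 = X) ∧
    (∀ X : Matrix (Fin n) (Fin n) K, 0 + X - 0 * A * X = X) := by
  refine ⟨by simp, fun X Y hX hY => ?_, circ_assoc A, circ_zero A, zero_circ A⟩
  have hXY := circ_circ_eq_zero (circ_eq_zero_iff.mpr hX) (circ_eq_zero_iff.mpr hY)
  rw [← transpose_circ hA] at hXY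
  exact circ_eq_zero_iff.mp hXY

/-- for a symmetric matrix `A`, the set
`Ô_n(A;K) = { X | Xᵗ + X = Xᵗ A X }` is closed under `X ·_A Y = X + Y - XAY`,
and this operation makes it a monoid with identity element `0`. -/
theorem stmt6 {K : Type*} [CommRing K] {n : ℕ} (hn : 1 ≤ n)
    (A : Matrix (Fin n) (Fin n) K) (hA : Aᵀ = A) :
    -- 0 belongs to the set
    ((0 : Matrix (Fin n) (Fin n) K)ᵀ + 0 = (0 : Matrix (Fin n) (Fin n) K)ᵀ * A * 0) ∧
    -- closure under the product
    (∀ X Y : Matrix (Fin n) (Fin n) K,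
      Xᵀ + X = Xᵀ * A * X → Yᵀ + Y = Yᵀ * A * Y →
      (X + Y - X * A * Y)ᵀ + (X + Y - X * A * Y)
        = (X + Y - X * A * Y)ᵀ * A * (X + Y - X * A * Y)) ∧
    -- associativity
    (∀ X Y Z : Matrix (Fin n) (Fin n) K,
      ((X + Y - X * A * Y) + Z - (X + Y - X * A * Y) * A * Z)
        = (X + (Y + Z - Y * A * Z) - X * A * (Y + Z - Y * A * Z))) ∧
    -- 0 is a two-sided identity
    (∀ X : Matrix (Fin n) (Fin n) K, X + 0 - X * A * 0 = X) ∧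
    (∀ X : Matrix (Fin n) (Fin n) K, 0 + X - 0 * A * X = X) :=
  stmt6_general A hA
end

section
/- Let 𝔸 = M(n,n;K) with A ∈ M(n,n;K) fixed, and define GL_n(A;K) = { X | 1 - AX is invertible } with product X ·_A Y = X + Y - XAY. Then the Lie bracket of this group (computed via dual-numbers scalar extension, i.e., the commutator of ε₁X and ε₂Y in the second tangent group) is [X,Y]_A = XAY - YAX. -/
/-!
Write `x ∘ y = x + y - y a x`. If `x` and `y` are infinitesimal in the sense that
`x t x = 0` and `y t y = 0` for every `t`, expanding the iterated product shows that `-x` is the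
`∘`-inverse of `x` and that the commutator `x ∘ y ∘ (-x) ∘ (-y)` is `x a y - y a x`: every other
monomial contains `x` or `y` twice. In `K[ε₁][ε₂] ⊗ M(n,n;K)`, both `ε₁ X` and `ε₂ Y` are such
elements, and `ε₁X · A · ε₂Y = ε₁ε₂ XAY`.
-/

open TrivSqZeroExt

section CircMul

variable {D : Type*} [Ring D]

def circMul (a u v : D) : D := u + v - v * a * u

theorem circMul_self_neg (a x : D) : circMul a x (-x) = x * a * x := by
  simp only [circMul]; noncomm_ring

theorem circMul_neg_self (a x : D) : circMul a (-x) x = x * a * x := by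
  simp only [circMul]; noncomm_ring

theorem circMul_commutator {a x y : D} (hx : ∀ t, x * t * x = 0) (hy : ∀ t, y * t * y = 0) :
    circMul a (circMul a (circMul a x y) (-x)) (-y) = x * a * y - y * a * x := by
  calc circMul a (circMul a (circMul a x y) (-x)) (-y)
      = x * a * y - y * a * x + x * a * x - x * (a * y * a) * x + y * a * y
          - y * a * y * a * x + y * a * (x * a * x) + y * (a * x * a) * y
          - y * (a * x * a) * y * (a * x) := by
        simp only [circMul]; noncomm_ring
    _ = x * a * y - y * a * x := by simp [hx, hy]

end CircMul

section DualNumber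

variable {S : Type*} [Ring S]

theorem DualNumber.inr_mul_mul_inr (s t : S) (u : DualNumber S) :
    (inr s : DualNumber S) * u * inr t = 0 := by
  ext <;> simp

theorem DualNumber.inl_mul_mul_inl {p q : S} (h : ∀ r, p * r * q = 0) (u : DualNumber S) :
    (inl p : DualNumber S) * u * inl q = 0 := by
  ext <;> simp [h]

theorem DualNumber.inl_inr_mul_inl_inl_mul_inr_inl (x a y : S) :
    (inl (inr x) : DualNumber (DualNumber S)) * inl (inl a) * inr (inl y) =
      inr (inr (x * a * y)) := by
  simp only [inl_mul_inl, inr_mul_inl, inl_mul_inr, smul_eq_mul, op_smul_eq_mul]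

theorem DualNumber.inr_inl_mul_inl_inl_mul_inl_inr (y a x : S) :
    (inr (inl y) : DualNumber (DualNumber S)) * inl (inl a) * inl (inr x) =
      inr (inr (y * a * x)) := by
  simp only [inl_mul_inl, inr_mul_inl, inl_mul_inr, smul_eq_mul, op_smul_eq_mul]

end DualNumber

/-- in the second-order dual-numbers scalar extension
`K[ε₁][ε₂]` of the matrix algebra, with the group product
`X ·_A Z = X + Z - ZAX` of `GL_n(A;K)`, the element `ε₁(-X)` is the inverse
of `ε₁X` (and similarly for `ε₂Y`), and the group commutator
`(ε₁X)(ε₂Y)(ε₁X)⁻¹(ε₂Y)⁻¹` equals `ε₁ε₂(XAY - YAX)`; i.e. the Lie bracket of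
the group `GL_n(A;K)` is `[X,Y]_A = XAY - YAX`. -/
theorem stmt7 {K : Type*} [CommRing K] {n : ℕ}
    (A X Y : Matrix (Fin n) (Fin n) K) :
    letI R := Matrix (Fin n) (Fin n) K
    letI D := DualNumber (DualNumber R)
    letI A' : D := inl (inl A)
    letI op : D → D → D := fun u v => u + v - v * A' * u
    letI e₁ : R → D := fun M => inl (inr M)   -- ε₁ M
    letI e₂ : R → D := fun M => inr (inl M)   -- ε₂ M
    -- ε₁(-X) is the ·_A-inverse of ε₁X, and ε₂(-Y) that of ε₂Y
    (op (e₁ X) (e₁ (-X)) = 0 ∧ op (e₁ (-X)) (e₁ X) = 0) ∧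
    (op (e₂ Y) (e₂ (-Y)) = 0 ∧ op (e₂ (-Y)) (e₂ Y) = 0) ∧
    -- the group commutator equals ε₁ε₂ (XAY - YAX)
    op (op (op (e₁ X) (e₂ Y)) (e₁ (-X))) (e₂ (-Y))
      = inr (inr (X * A * Y - Y * A * X)) := by
  simp only [inl_neg, inr_neg]
  have hX := DualNumber.inl_mul_mul_inl (DualNumber.inr_mul_mul_inr X X)
  have hY := DualNumber.inr_mul_mul_inr (inl Y : DualNumber (Matrix (Fin n) (Fin n) K)) (inl Y)
  refine ⟨⟨?_, ?_⟩, ⟨?_, ?_⟩, ?_⟩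
  · exact (circMul_self_neg _ _).trans (hX _)
  · exact (circMul_neg_self _ _).trans (hX _)
  · exact (circMul_self_neg _ _).trans (hY _)
  · exact (circMul_neg_self _ _).trans (hY _)
  · refine (circMul_commutator hX hY).trans ?_
    rw [DualNumber.inl_inr_mul_inl_inl_mul_inr_inl, DualNumber.inr_inl_mul_inl_inl_mul_inl_inr,
      inr_sub, inr_sub]
end

section
/- Let W be a module with a non-degenerate sesquilinear form β (Hermitian or skew-Hermitian). If the pair of submodules (x,a) is adjoinable, i.e., W = x ⊕ a and the projection P := P^a_x admits an adjoint P* with β(v, Pw) = β(P*v, w) for all v, w, then P* is idempotent, ker P* = x^⊥, im P* = a^⊥, so that W = x^⊥ ⊕ a^⊥ and (P^a_x)* = P^{x^⊥}_{a^⊥}. Moreover (x^⊥)^⊥ = x and (a^⊥)^⊥ = a. -/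
/-!
The adjoint `P*` of `P = P^a_x` is computed from the identity `β(v, P w) = β(P* v, w)`: testing it
against `w ∈ a` (where `P w = 0`) puts `P* v` in `a^⊥`, testing it against `w ∈ x` (where
`P w = w`) puts `v - P* v` in `x^⊥`, and non-degeneracy turns the remaining identities into
`P* u = u` on `a^⊥` and `P* v = 0` on `x^⊥`. For the biorthogonality, if `w ∈ (x^⊥)^⊥` then
`β(v, w) = β(P* v, w) = β(v, P w)` for every `v`, so `w = P w ∈ x`; dually `w ∈ (a^⊥)^⊥` gives
`β(v, P w) = β(P* v, w) = 0`, so `P w = 0` and `w ∈ a`.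
-/

/-- Orthogonal complement (as a set) of a set `S` with respect to a form `β`. -/
def perpSet {B W : Type*} (β : W → W → B) [Zero B] (S : Set W) : Set W :=
  {w | ∀ s ∈ S, β s w = 0}

namespace AddMonoidHom

variable {B W : Type*} [AddCommGroup B] [AddCommGroup W]

def IsRefl (β : W →+ W →+ B) : Prop :=
  ∀ v w, β v w = 0 → β w v = 0

theorem isRefl_of_star_eq {R : Type*} [Ring R] [StarRing R] {β : W →+ W →+ R}
    (h : (∀ v w, β v w = star (β w v)) ∨ (∀ v w, β v w = -star (β w v))) : β.IsRefl := by
  intro v w hvw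
  rcases h with h | h <;> simp [h w v, hvw]

theorem IsRefl.subset_perpSet_perpSet {β : W →+ W →+ B} (hβ : β.IsRefl) (S : Set W) :
    S ⊆ perpSet (β · ·) (perpSet (β · ·) S) :=
  fun w hw _ hs => hβ _ _ (hs w hw)

end AddMonoidHom

section Adjoinable

variable {B W : Type*} [AddCommGroup B] [AddCommGroup W]

/-- `(x, a)` is adjoinable: `W = x ⊕ a`, witnessed by the projection `P = P^a_x`, and `P' = P*`. -/
structure IsAdjoinable (β : W →+ W →+ B) (x a : AddSubgroup W) (P P' : W → W) : Prop where
  disjoint : Disjoint x a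
  proj : ∀ w, P w ∈ x ∧ w - P w ∈ a
  adjoint : ∀ v w, β v (P w) = β (P' v) w

namespace IsAdjoinable

variable {β : W →+ W →+ B} {x a : AddSubgroup W} {P P' : W → W}

theorem proj_eq_self (h : IsAdjoinable β x a P P') {w : W} (hw : w ∈ x) : P w = w :=
  (sub_eq_zero.mp (AddSubgroup.disjoint_def.mp h.disjoint
    (x.sub_mem hw (h.proj w).1) (h.proj w).2)).symm

theorem proj_eq_zero (h : IsAdjoinable β x a P P') {w : W} (hw : w ∈ a) : P w = 0 :=
  AddSubgroup.disjoint_def.mp h.disjoint (h.proj w).1 (by simpa using a.sub_mem hw (h.proj w).2)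

theorem adjoint_mem_perpSet (h : IsAdjoinable β x a P P') (hβ : β.IsRefl) (v : W) :
    P' v ∈ perpSet (β · ·) a := fun s hs =>
  hβ _ _ (by rw [← h.adjoint, h.proj_eq_zero hs, map_zero])

theorem sub_adjoint_mem_perpSet (h : IsAdjoinable β x a P P') (hβ : β.IsRefl) (v : W) :
    v - P' v ∈ perpSet (β · ·) x := fun s hs =>
  hβ _ _ (by rw [AddMonoidHom.map_div₂, ← h.adjoint, h.proj_eq_self hs, sub_self])

theorem adjoint_eq_self (h : IsAdjoinable β x a P P') (hβ : β.IsRefl)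
    (hnd : ∀ v, (∀ w, β v w = 0) → v = 0) {u : W} (hu : u ∈ perpSet (β · ·) a) : P' u = u := by
  refine sub_eq_zero.mp (hnd _ fun w => ?_)
  have hPw : β u (w - P w) = 0 := hβ _ _ (hu _ (h.proj w).2)
  rw [map_sub, sub_eq_zero] at hPw
  rw [AddMonoidHom.map_div₂, ← h.adjoint, ← hPw, sub_self]

theorem adjoint_eq_zero_iff (h : IsAdjoinable β x a P P') (hβ : β.IsRefl)
    (hnd : ∀ v, (∀ w, β v w = 0) → v = 0) {v : W} : P' v = 0 ↔ v ∈ perpSet (β · ·) x := by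
  refine ⟨fun hv => by simpa [hv] using h.sub_adjoint_mem_perpSet hβ v, fun hv => ?_⟩
  exact hnd _ fun w => by rw [← h.adjoint, hβ _ _ (hv _ (h.proj w).1)]

theorem range_adjoint (h : IsAdjoinable β x a P P') (hβ : β.IsRefl)
    (hnd : ∀ v, (∀ w, β v w = 0) → v = 0) : Set.range P' = perpSet (β · ·) a :=
  (Set.range_subset_iff.mpr (h.adjoint_mem_perpSet hβ)).antisymm
    fun u hu => ⟨u, h.adjoint_eq_self hβ hnd hu⟩

theorem perpSet_inter_perpSet (h : IsAdjoinable β x a P P') (hβ : β.IsRefl)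
    (hnd : ∀ v, (∀ w, β v w = 0) → v = 0) :
    perpSet (β · ·) x ∩ perpSet (β · ·) a = {0} := by
  refine Set.eq_singleton_iff_unique_mem.mpr
    ⟨⟨fun s _ => map_zero (β s), fun s _ => map_zero (β s)⟩, fun v ⟨hvx, hva⟩ => ?_⟩
  rw [← h.adjoint_eq_self hβ hnd hva, (h.adjoint_eq_zero_iff hβ hnd).mpr hvx]

theorem perpSet_perpSet_left (h : IsAdjoinable β x a P P') (hβ : β.IsRefl)
    (hnd : ∀ w, (∀ v, β v w = 0) → w = 0) :
    perpSet (β · ·) (perpSet (β · ·) x) = x := by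
  refine Set.Subset.antisymm (fun w hw => ?_) (hβ.subset_perpSet_perpSet _)
  have hPw : P w = w := by
    refine (sub_eq_zero.mp (hnd _ fun v => ?_)).symm
    have hv : β (v - P' v) w = 0 := hw _ (h.sub_adjoint_mem_perpSet hβ v)
    rw [map_sub, h.adjoint, ← AddMonoidHom.map_div₂, hv]
  exact hPw ▸ (h.proj w).1

theorem perpSet_perpSet_right (h : IsAdjoinable β x a P P') (hβ : β.IsRefl)
    (hnd : ∀ w, (∀ v, β v w = 0) → w = 0) :
    perpSet (β · ·) (perpSet (β · ·) a) = a := by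
  refine Set.Subset.antisymm (fun w hw => ?_) (hβ.subset_perpSet_perpSet _)
  have hPw : P w = 0 := hnd _ fun v => by
    rw [h.adjoint]
    exact hw _ (h.adjoint_mem_perpSet hβ v)
  simpa [hPw] using (h.proj w).2

end IsAdjoinable

end Adjoinable

theorem stmt8_general {B W : Type*} [Ring B] [StarRing B] [AddCommGroup W] [Module B W]
    (β : W → W → B)
    (hadd₁ : ∀ v v' w : W, β (v + v') w = β v w + β v' w)
    (hadd₂ : ∀ v w w' : W, β v (w + w') = β v w + β v w')
    (hnd₁ : ∀ v : W, (∀ w : W, β v w = 0) → v = 0)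
    (hnd₂ : ∀ v : W, (∀ w : W, β w v = 0) → v = 0)
    (hherm : (∀ v w : W, β v w = star (β w v)) ∨ (∀ v w : W, β v w = -star (β w v)))
    (x a : Submodule B W) (hxa : IsCompl x a)
    (P P' : W → W)
    (hP : ∀ w : W, P w ∈ x ∧ w - P w ∈ a)  -- P is the projection P^a_x
    (hadj : ∀ v w : W, β v (P w) = β (P' v) w) :
    -- P* is idempotent
    (∀ v : W, P' (P' v) = P' v) ∧
    -- ker P* = x^⊥
    ({v : W | P' v = 0} = perpSet β (x : Set W)) ∧
    -- im P* = a^⊥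
    (Set.range P' = perpSet β (a : Set W)) ∧
    -- (P^a_x)* = P^{x^⊥}_{a^⊥}: P* projects onto a^⊥ along x^⊥, so W = x^⊥ ⊕ a^⊥
    (∀ v : W, P' v ∈ perpSet β (a : Set W) ∧ v - P' v ∈ perpSet β (x : Set W)) ∧
    (perpSet β (x : Set W) ∩ perpSet β (a : Set W) = {0}) ∧
    -- biorthogonality
    (perpSet β (perpSet β (x : Set W)) = (x : Set W)) ∧
    (perpSet β (perpSet β (a : Set W)) = (a : Set W)) := by
  let β₂ : W →+ W →+ B :=
    AddMonoidHom.mk' (fun v => AddMonoidHom.mk' (β v) (hadd₂ v)) fun v v' =>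
      AddMonoidHom.ext (hadd₁ v v')
  have hβ : β₂.IsRefl := AddMonoidHom.isRefl_of_star_eq hherm
  have h : IsAdjoinable β₂ x.toAddSubgroup a.toAddSubgroup P P' :=
    ⟨AddSubgroup.disjoint_def.mpr fun hx ha => Submodule.disjoint_def.mp hxa.disjoint _ hx ha,
      hP, hadj⟩
  exact ⟨fun v => h.adjoint_eq_self hβ hnd₁ (h.adjoint_mem_perpSet hβ v),
    Set.ext fun v => h.adjoint_eq_zero_iff hβ hnd₁, h.range_adjoint hβ hnd₁,
    fun v => ⟨h.adjoint_mem_perpSet hβ v, h.sub_adjoint_mem_perpSet hβ v⟩,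
    h.perpSet_inter_perpSet hβ hnd₁, h.perpSet_perpSet_left hβ hnd₂,
    h.perpSet_perpSet_right hβ hnd₂⟩

/-- for a non-degenerate Hermitian or skew-Hermitian sesquilinear
form `β` on `W` and an adjoinable transversal pair `(x,a)` with projection
`P = P^a_x` and adjoint `P*`, the adjoint `P*` is idempotent, has kernel `x^⊥`
and image `a^⊥`, coincides with the projection `P^{x^⊥}_{a^⊥}` (so that
`W = x^⊥ ⊕ a^⊥`), and `(x^⊥)^⊥ = x`, `(a^⊥)^⊥ = a`. -/
theorem stmt8 {B W : Type*} [Ring B] [StarRing B] [AddCommGroup W] [Module B W]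
    (β : W → W → B)
    (hadd₁ : ∀ v v' w : W, β (v + v') w = β v w + β v' w)
    (hadd₂ : ∀ v w w' : W, β v (w + w') = β v w + β v w')
    (hsmul₁ : ∀ (r : B) (v w : W), β (r • v) w = star r * β v w)
    (hsmul₂ : ∀ (r : B) (v w : W), β v (r • w) = β v w * r)
    (hnd₁ : ∀ v : W, (∀ w : W, β v w = 0) → v = 0)
    (hnd₂ : ∀ v : W, (∀ w : W, β w v = 0) → v = 0)
    (hherm : (∀ v w : W, β v w = star (β w v)) ∨ (∀ v w : W, β v w = -star (β w v)))
    (x a : Submodule B W) (hxa : IsCompl x a)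
    (P P' : W → W)
    (hP : ∀ w : W, P w ∈ x ∧ w - P w ∈ a)  -- P is the projection P^a_x
    (hadj : ∀ v w : W, β v (P w) = β (P' v) w) :
    -- P* is idempotent
    (∀ v : W, P' (P' v) = P' v) ∧
    -- ker P* = x^⊥
    ({v : W | P' v = 0} = perpSet β (x : Set W)) ∧
    -- im P* = a^⊥
    (Set.range P' = perpSet β (a : Set W)) ∧
    -- (P^a_x)* = P^{x^⊥}_{a^⊥}: P* projects onto a^⊥ along x^⊥, so W = x^⊥ ⊕ a^⊥
    (∀ v : W, P' v ∈ perpSet β (a : Set W) ∧ v - P' v ∈ perpSet β (x : Set W)) ∧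
    (perpSet β (x : Set W) ∩ perpSet β (a : Set W) = {0}) ∧
    -- biorthogonality
    (perpSet β (perpSet β (x : Set W)) = (x : Set W)) ∧
    (perpSet β (perpSet β (a : Set W)) = (a : Set W)) :=
  stmt8_general β hadd₁ hadd₂ hnd₁ hnd₂ hherm x a hxa P P' hP hadj
end

section
/- For the generalized projection P^a_x = { (ζ,ω) | ω ∈ x, ω - ζ ∈ a }, one has: image pr₂(P^a_x) = x, kernel P^a_x ∩ (W × 0) corresponds to a, indefiniteness P^a_x ∩ (0 × W) corresponds to a ⊓ x, and domain pr₁(P^a_x) = x ⊔ a. Moreover 1 - P^a_x = P^x_a, where 1 - F := { (ξ, ξ - α) | (ξ, α) ∈ F } is the relation-difference of the identity and F. -/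
variable {R W : Type*} [Ring R] [AddCommGroup W] [Module R W]

/-- The generalized projection `P^a_x = { (ζ,ω) | ω ∈ x, ω - ζ ∈ a }`. -/
def genProj (x a : Submodule R W) : Submodule R (W × W) where
  carrier := {p | p.2 ∈ x ∧ p.2 - p.1 ∈ a}
  add_mem' := fun {p q} hp hq => by
    refine ⟨x.add_mem hp.1 hq.1, ?_⟩
    have h : (p + q).2 - (p + q).1 = (p.2 - p.1) + (q.2 - q.1) := by
      show p.2 + q.2 - (p.1 + q.1) = _; abel
    rw [h]; exact a.add_mem hp.2 hq.2
  zero_mem' := ⟨x.zero_mem, by simpa using a.zero_mem⟩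
  smul_mem' := fun r p hp => by
    refine ⟨x.smul_mem r hp.1, ?_⟩
    have h : (r • p).2 - (r • p).1 = r • (p.2 - p.1) := by
      show r • p.2 - r • p.1 = _; rw [smul_sub]
    rw [h]; exact a.smul_mem r hp.2

/-- The difference `F - G` of linear relations:
`{ (ξ, α-β) | (ξ,α) ∈ F, (ξ,β) ∈ G }`. -/
def relSub (F G : Submodule R (W × W)) : Submodule R (W × W) where
  carrier := {p | ∃ α β, (p.1, α) ∈ F ∧ (p.1, β) ∈ G ∧ p.2 = α - β}
  add_mem' := fun {p q} hp hq => by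
    obtain ⟨α, β, h1, h2, h3⟩ := hp; obtain ⟨α', β', h1', h2', h3'⟩ := hq
    refine ⟨α + α', β + β', F.add_mem h1 h1', G.add_mem h2 h2', ?_⟩
    show p.2 + q.2 = _; rw [h3, h3']; abel
  zero_mem' := ⟨0, 0, F.zero_mem, G.zero_mem, by simp⟩
  smul_mem' := fun r p hp => by
    obtain ⟨α, β, h1, h2, h3⟩ := hp
    refine ⟨r • α, r • β, F.smul_mem r h1, G.smul_mem r h2, ?_⟩
    show r • p.2 = _; rw [h3, smul_sub]

/-- The identity relation (diagonal). -/
def relOne : Submodule R (W × W) where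
  carrier := {p | p.1 = p.2}
  add_mem' := fun {p q} hp hq => by
    show p.1 + q.1 = p.2 + q.2; rw [hp, hq]
  zero_mem' := rfl
  smul_mem' := fun r p hp => by
    show r • p.1 = r • p.2; rw [hp]

section GenProj

variable (x a : Submodule R W)

@[simp]
theorem mem_genProj {p : W × W} : p ∈ genProj x a ↔ p.2 ∈ x ∧ p.2 - p.1 ∈ a := Iff.rfl

theorem mem_relSub_relOne {F : Submodule R (W × W)} {p : W × W} :
    p ∈ relSub relOne F ↔ (p.1, p.1 - p.2) ∈ F := by
  constructor
  · rintro ⟨α, β, (rfl : p.1 = α), hβ, hp⟩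
    rwa [hp, sub_sub_cancel]
  · exact fun h => ⟨p.1, p.1 - p.2, rfl, h, (sub_sub_cancel _ _).symm⟩

theorem map_snd_genProj : (genProj x a).map (LinearMap.snd R W W) = x := by
  ext ω
  refine ⟨fun ⟨p, hp, hω⟩ => hω ▸ hp.1, fun hω => ⟨(ω, ω), ⟨hω, by simp⟩, rfl⟩⟩

theorem map_fst_genProj : (genProj x a).map (LinearMap.fst R W W) = x ⊔ a := by
  ext ζ
  simp only [Submodule.mem_map, LinearMap.fst_apply, Submodule.mem_sup, Prod.exists, mem_genProj]
  constructor
  · rintro ⟨_, ω, ⟨hω, hα⟩, rfl⟩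
    exact ⟨ω, hω, _, a.neg_mem hα, by abel⟩
  · rintro ⟨ω, hω, α, hα, rfl⟩
    exact ⟨_, ω, ⟨hω, by simpa using a.neg_mem hα⟩, rfl⟩

theorem genProj_inf_prod_top_bot : genProj x a ⊓ (⊤ : Submodule R W).prod ⊥ = a.prod ⊥ := by
  ext ⟨ζ, ω⟩
  simp only [Submodule.mem_inf, Submodule.mem_prod, Submodule.mem_top, Submodule.mem_bot,
    true_and, mem_genProj]
  constructor
  · rintro ⟨⟨-, hζ⟩, rfl⟩
    exact ⟨by simpa using hζ, rfl⟩
  · rintro ⟨hζ, rfl⟩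
    exact ⟨⟨x.zero_mem, by simpa using hζ⟩, rfl⟩

theorem genProj_inf_prod_bot_top :
    genProj x a ⊓ (⊥ : Submodule R W).prod ⊤ = (⊥ : Submodule R W).prod (a ⊓ x) := by
  ext ⟨ζ, ω⟩
  simp only [Submodule.mem_inf, Submodule.mem_prod, Submodule.mem_top, Submodule.mem_bot,
    and_true, mem_genProj]
  constructor
  · rintro ⟨⟨hω, hωa⟩, rfl⟩
    exact ⟨rfl, by simpa using hωa, hω⟩
  · rintro ⟨rfl, hωa, hω⟩
    exact ⟨⟨hω, by simpa using hωa⟩, rfl⟩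

theorem relSub_relOne_genProj : relSub relOne (genProj x a) = genProj a x := by
  ext ⟨ξ, η⟩
  simp only [mem_relSub_relOne, mem_genProj, sub_sub_cancel_left, neg_mem_iff]
  rw [sub_mem_comm_iff, and_comm]

end GenProj

/-- image, kernel, indefiniteness and domain of the generalized
projection `P^a_x`, and `1 - P^a_x = P^x_a`. -/
theorem stmt13 (x a : Submodule R W) :
    -- im P^a_x = x
    Submodule.map (LinearMap.snd R W W) (genProj x a) = x ∧
    -- ker P^a_x = P^a_x ∩ (W × 0) corresponds to a
    genProj x a ⊓ Submodule.prod ⊤ ⊥ = Submodule.prod a ⊥ ∧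
    -- indef P^a_x = P^a_x ∩ (0 × W) corresponds to a ⊓ x
    genProj x a ⊓ Submodule.prod ⊥ ⊤ = Submodule.prod ⊥ (a ⊓ x) ∧
    -- dom P^a_x = x ⊔ a
    Submodule.map (LinearMap.fst R W W) (genProj x a) = x ⊔ a ∧
    -- 1 - P^a_x = P^x_a
    relSub relOne (genProj x a) = genProj a x :=
  ⟨map_snd_genProj x a, genProj_inf_prod_top_bot x a, genProj_inf_prod_bot_top x a,
    map_fst_genProj x a, relSub_relOne_genProj x a⟩
end

section
/- Let F ⊆ W × W be any linear relation and c, z submodules of W. Then F ∘ P^c_z ∘ F⁻¹ = P^{F(c)}_{F(z)}, where F(z) = { δ | ∃γ ∈ z, (γ,δ) ∈ F } is the image of z under F and F⁻¹ = { (w,v) | (v,w) ∈ F }. -/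
variable {R W : Type*} [Ring R] [AddCommGroup W] [Module R W]

/-- Composition `G ∘ F` of linear relations. -/
def relComp (G F : Submodule R (W × W)) : Submodule R (W × W) where
  carrier := {p | ∃ v, (p.1, v) ∈ F ∧ (v, p.2) ∈ G}
  add_mem' := fun {p q} hp hq => by
    obtain ⟨v, hv1, hv2⟩ := hp; obtain ⟨w, hw1, hw2⟩ := hq
    exact ⟨v + w, F.add_mem hv1 hw1, G.add_mem hv2 hw2⟩
  zero_mem' := ⟨0, F.zero_mem, G.zero_mem⟩
  smul_mem' := fun r p hp => by
    obtain ⟨v, hv1, hv2⟩ := hp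
    exact ⟨r • v, F.smul_mem r hv1, G.smul_mem r hv2⟩

/-- The inverse of a linear relation. -/
def relInv (F : Submodule R (W × W)) : Submodule R (W × W) where
  carrier := {p | (p.2, p.1) ∈ F}
  add_mem' := fun hp hq => F.add_mem hp hq
  zero_mem' := F.zero_mem
  smul_mem' := fun r _ hp => F.smul_mem r hp

/-- The image of a submodule `z` under a linear relation `F`. -/
def relImg (F : Submodule R (W × W)) (z : Submodule R W) : Submodule R W where
  carrier := {δ | ∃ γ ∈ z, (γ, δ) ∈ F}
  add_mem' := fun {p q} hp hq => by
    obtain ⟨γ, hγ, hγF⟩ := hp; obtain ⟨γ', hγ', hγF'⟩ := hq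
    exact ⟨γ + γ', z.add_mem hγ hγ', F.add_mem hγF hγF'⟩
  zero_mem' := ⟨0, z.zero_mem, F.zero_mem⟩
  smul_mem' := fun r p hp => by
    obtain ⟨γ, hγ, hγF⟩ := hp
    exact ⟨r • γ, z.smul_mem r hγ, F.smul_mem r hγF⟩

section Conjugation

variable (F : Submodule R (W × W)) (c z : Submodule R W)

lemma relComp_genProj_relInv_le :
    relComp F (relComp (genProj z c) (relInv F)) ≤ genProj (relImg F z) (relImg F c) := by
  rintro ⟨ζ, ω⟩ ⟨v, ⟨u, huζ, hv, hvu⟩, hvω⟩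
  refine ⟨⟨v, hv, hvω⟩, v - u, hvu, ?_⟩
  simpa only [Prod.mk_sub_mk] using F.sub_mem hvω huζ

lemma genProj_relImg_le_relComp :
    genProj (relImg F z) (relImg F c) ≤ relComp F (relComp (genProj z c) (relInv F)) := by
  rintro ⟨ζ, ω⟩ ⟨⟨γ, hγ, hγω⟩, γ', hγ', hγ'ω⟩
  -- `ζ = ω - (ω - ζ)` is the image of `γ - γ'`, which `P^c_z` sends to `γ`.
  have hζ : (γ - γ', ζ) ∈ F := by
    simpa only [Prod.mk_sub_mk, sub_sub_cancel] using F.sub_mem hγω hγ'ω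
  exact ⟨γ, ⟨γ - γ', hζ, hγ, by rwa [sub_sub_cancel]⟩, hγω⟩

end Conjugation

/-- conjugation of a generalized projection by any linear
relation: `F ∘ P^c_z ∘ F⁻¹ = P^{F(c)}_{F(z)}`. -/
theorem stmt14 (F : Submodule R (W × W)) (c z : Submodule R W) :
    relComp F (relComp (genProj z c) (relInv F)) = genProj (relImg F z) (relImg F c) :=
  le_antisymm (relComp_genProj_relInv_le F c z) (genProj_relImg_le_relComp F c z)
end
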